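/- Let P be a prefix with existential variables Y = {y_1,…,y_k} and dependency sets D_1,…,D_k ⊆ X, let G_syn be an admissible group w.r.t. P with associated group G_sem, and let σ ∈ A(X), f ∈ G_sem, s ∈ S(P), and i ∈ {1,…,k} be such that: (1) for every j ∈ {1,…,k} with j < i or D_i ⊄ D_j, and every τ ∈ A(X) with τ|_{D_i} = σ|_{D_i}, one has [ev_{y_j}]_{τ_s} = [ev_{y_j}]_{τ_{f(s)}}; and (2) for every g ∈ G_syn and every τ ∈ A(X), τ|_{D_i} = σ|_{D_i} implies g(τ)|_{D_i} = τ|_{D_i}. Then there exists an interpretation s' ∈ S(P) such that for all j ∈ {1,…,k} and all τ ∈ A(X): [ev_{y_j}]_{τ_{s'}} = [ev_{y_j}]_{τ_s} whenever j < i, and also whenever j ≥ i and τ|_{D_i} ≠ σ|_{D_i}; and [ev_{y_j}]_{τ_{s'}} = [ev_{y_j}]_{τ_{f(s)}} whenever j ≥ i and τ|_{D_i} = σ|_{D_i}. Moreover, there exists h ∈ G_sem with h(s) = s'. -/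

import Mathlib

/-!
The grafted interpretation `s'` coincides, for each assignment `τ` of the universal variables,
with `f s` (if `τ` agrees with `σ` on `D_i`) or with `s` (otherwise). Since the region is mapped
into itself by every syntactic symmetry, each `τ` is handled either by the identity or by the
symmetry witnessing `f`, in both directions `s → s' → f s`. Because `f` has finite order, `f s`
leads back to `s`, so `s` and `s'` are related both ways and the transposition of `s` and `s'`
is the required element of `G_sem`.
-/


namespace DQBF

/-- Boolean formulas over variables `α`, modeled by their truth functions. -/
abbrev BF (α : Type*) := (α → Bool) → Bool

/-- The evaluation formula of a variable `v`. -/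
def ev {α : Type*} (v : α) : BF α := fun τ => τ v

/-- The assignment `g(σ)` induced by `g : BF(V) → BF(V)` and `σ ∈ A(V)`:
`g(σ)(v) = [g(ev_v)]_σ`. -/
def pushA {α : Type*} (g : BF α → BF α) (σ : α → Bool) : α → Bool :=
  fun v => g (ev v) σ

/-- `g` preserves propositional satisfiability: `[g(φ)]_σ = [φ]_{g(σ)}`. -/
def PreservesSat {α : Type*} (g : BF α → BF α) : Prop :=
  ∀ (φ : BF α) (σ : α → Bool), g φ σ = φ (pushA g σ)

/-- A formula `F` depends only on the variables in `S`. -/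
def DependsOnlyOn {α : Type*} (F : BF α) (S : Set α) : Prop :=
  ∀ τ τ' : α → Bool, (∀ v ∈ S, τ v = τ' v) → F τ = F τ'

variable {X Y : Type*}

/-- Extension of an assignment of the universal variables to all of `V = X ⊕ Y`
(with junk value `false` on `Y`). -/
def extendX (σ : X → Bool) : X ⊕ Y → Bool := Sum.elim σ fun _ => false

/-- The assignment `g(σ) ∈ A(X)` for `σ ∈ A(X)` and admissible `g`:
`g(σ)(x) = [g(ev_x)]_σ` (well-defined via any extension since `g(ev_x)` depends only on `X`). -/
def pushX (g : BF (X ⊕ Y) → BF (X ⊕ Y)) (σ : X → Bool) : X → Bool :=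
  fun x => g (ev (Sum.inl x)) (extendX σ)

/-- An interpretation for the prefix with dependency sets `D`: a family of Skolem
functions, each depending only on its dependency set. -/
structure Interp (D : Y → Set X) where
  sk : Y → BF X
  dep : ∀ y : Y, ∀ σ σ' : X → Bool, (∀ x ∈ D y, σ x = σ' x) → sk y σ = sk y σ'

/-- The induced assignment `σ_s ∈ A(X ⊕ Y)` of `σ ∈ A(X)` and `s ∈ S(P)`. -/
def induced {D : Y → Set X} (σ : X → Bool) (s : Interp D) : X ⊕ Y → Bool :=
  Sum.elim σ fun y => s.sk y σ

/-- Truth value of the DQBF `P.φ` under the interpretation `s`: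
`[P.φ]_s = ⊤` iff `[φ]_{σ_s} = ⊤` for every `σ ∈ A(X)`. -/
def Truth {D : Y → Set X} (φ : BF (X ⊕ Y)) (s : Interp D) : Prop :=
  ∀ σ : X → Bool, φ (induced σ s) = true

/-- A formula `F ∈ BF(Y)` depends on the universal variable `x` if it depends
semantically on some `y ∈ Y` with `x ∈ D_y`. -/
def DependsOn (D : Y → Set X) (F : BF (X ⊕ Y)) (x : X) : Prop :=
  ∃ y : Y, x ∈ D y ∧ ∃ τ τ' : X ⊕ Y → Bool,
    (∀ v, v ≠ Sum.inr y → τ v = τ' v) ∧ F τ ≠ F τ'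

/-- `g`, together with its two-sided inverse `g'`, is admissible w.r.t. the prefix `D`. -/
structure AdmissiblePair (D : Y → Set X) (g g' : BF (X ⊕ Y) → BF (X ⊕ Y)) : Prop where
  left_inv : ∀ φ, g' (g φ) = φ
  right_inv : ∀ φ, g (g' φ) = φ
  presSat : PreservesSat g
  varX : ∀ x : X, DependsOnlyOn (g (ev (Sum.inl x))) (Set.range Sum.inl)
  varY : ∀ y : Y, DependsOnlyOn (g (ev (Sum.inr y))) (Set.range Sum.inr)
  depCond : ∀ (y : Y) (x : X), DependsOn D (g (ev (Sum.inr y))) x →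
    DependsOnlyOn (g' (ev (Sum.inl x))) (Sum.inl '' D y)

/-- An admissible group w.r.t. the prefix `D`: a group (under composition) of
admissible functions. -/
structure AdmissibleGroup (D : Y → Set X) (G : Set (BF (X ⊕ Y) → BF (X ⊕ Y))) : Prop where
  id_mem : id ∈ G
  comp_mem : ∀ g ∈ G, ∀ h ∈ G, (g ∘ h) ∈ G
  inv_mem : ∀ g ∈ G, ∃ g' ∈ G, AdmissiblePair D g g'

/-- The associated group `G_sem` of a syntactic group `G`: all bijections
`f : S(P) → S(P)` such that for all `s` and `σ` there is `g ∈ G` with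
`g(σ)_{f(s)} = g(σ_s)`. -/
def Associated (D : Y → Set X) (G : Set (BF (X ⊕ Y) → BF (X ⊕ Y))) :
    Set (Interp D → Interp D) :=
  {f | Function.Bijective f ∧
    ∀ (s : Interp D) (σ : X → Bool), ∃ g ∈ G,
      induced (pushX g σ) (f s) = pushA g (induced σ s)}

/-- A group of bijections of `S(P)`. -/
structure BijGroup {D : Y → Set X} (G : Set (Interp D → Interp D)) : Prop where
  bij : ∀ f ∈ G, Function.Bijective f
  id_mem : id ∈ G
  comp_mem : ∀ f ∈ G, ∀ h ∈ G, (f ∘ h) ∈ G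
  inv_mem : ∀ f ∈ G, ∀ f', Function.LeftInverse f' f → Function.RightInverse f' f → f' ∈ G

/-- `ψ` is a conjunctive symmetry breaker for the group `G` of bijections of `S(P)`. -/
def ConjSymBreaker {D : Y → Set X} (G : Set (Interp D → Interp D)) (ψ : BF (X ⊕ Y)) : Prop :=
  ∀ s : Interp D, ∃ f ∈ G, Truth ψ (f s)

section Orbits

variable {D : Y → Set X} {G : Set (BF (X ⊕ Y) → BF (X ⊕ Y))}

theorem AdmissibleGroup.preservesSat (hG : AdmissibleGroup D G) {g : BF (X ⊕ Y) → BF (X ⊕ Y)}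
    (hg : g ∈ G) : PreservesSat g := by
  obtain ⟨_, _, pair⟩ := hG.inv_mem g hg
  exact pair.presSat

theorem AdmissibleGroup.dependsOnlyOn_inl (hG : AdmissibleGroup D G)
    {g : BF (X ⊕ Y) → BF (X ⊕ Y)} (hg : g ∈ G) (x : X) :
    DependsOnlyOn (g (ev (Sum.inl x))) (Set.range Sum.inl) := by
  obtain ⟨_, _, pair⟩ := hG.inv_mem g hg
  exact pair.varX x

theorem pushA_comp {α : Type*} {g₁ : BF α → BF α} (h₁ : PreservesSat g₁) (g₂ : BF α → BF α)
    (ρ : α → Bool) : pushA (g₁ ∘ g₂) ρ = pushA g₂ (pushA g₁ ρ) :=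
  funext fun v => h₁ (g₂ (ev v)) ρ

theorem pushX_comp {g₁ g₂ : BF (X ⊕ Y) → BF (X ⊕ Y)} (h₁ : PreservesSat g₁)
    (h₂ : ∀ x, DependsOnlyOn (g₂ (ev (Sum.inl x))) (Set.range Sum.inl)) (σ : X → Bool) :
    pushX (g₁ ∘ g₂) σ = pushX g₂ (pushX g₁ σ) := by
  funext x
  rw [pushX, Function.comp_apply, h₁]
  exact h₂ x _ _ (by rintro _ ⟨x', rfl⟩; rfl)

/-- The relation underlying `Associated`: `u` is obtained from `t` by a syntactic symmetry,
chosen separately for every assignment `σ` of the universal variables. -/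
def SynRelated (D : Y → Set X) (G : Set (BF (X ⊕ Y) → BF (X ⊕ Y))) (t u : Interp D) : Prop :=
  ∀ σ : X → Bool, ∃ g ∈ G, induced (pushX g σ) u = pushA g (induced σ t)

theorem SynRelated.refl (hid : id ∈ G) (t : Interp D) : SynRelated D G t t :=
  fun _ => ⟨id, hid, rfl⟩

theorem SynRelated.trans (hG : AdmissibleGroup D G) {t u v : Interp D}
    (htu : SynRelated D G t u) (huv : SynRelated D G u v) : SynRelated D G t v := by
  intro σ
  obtain ⟨g₁, hg₁, e₁⟩ := htu σ
  obtain ⟨g₂, hg₂, e₂⟩ := huv (pushX g₁ σ)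
  refine ⟨g₁ ∘ g₂, hG.comp_mem g₁ hg₁ g₂ hg₂, ?_⟩
  rw [pushX_comp (hG.preservesSat hg₁) (hG.dependsOnlyOn_inl hg₂),
    pushA_comp (hG.preservesSat hg₁), ← e₁, e₂]

theorem SynRelated.iterate (hG : AdmissibleGroup D G) {f : Interp D → Interp D}
    (hf : ∀ t, SynRelated D G t (f t)) (n : ℕ) (t : Interp D) :
    SynRelated D G t (f^[n] t) := by
  induction n with
  | zero => exact SynRelated.refl hG.id_mem t
  | succ n ih =>
    rw [Function.iterate_succ_apply']
    exact ih.trans hG (hf _)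

instance Interp.finite [Finite X] [Finite Y] : Finite (Interp D) :=
  Finite.of_injective Interp.sk fun a b h => by cases a; cases b; cases h; rfl

/-- Every element of `G_sem` has finite order, so `f t` leads back to `t` through the orbit. -/
theorem SynRelated.apply_left_of_mem_associated [Finite X] [Finite Y]
    (hG : AdmissibleGroup D G) {f : Interp D → Interp D} (hf : f ∈ Associated D G)
    (t : Interp D) : SynRelated D G (f t) t := by
  obtain ⟨n, hn, hper⟩ := hf.1.injective.mem_periodicPts t
  have h := SynRelated.iterate hG hf.2 (n - 1) (f t)
  rwa [← Function.iterate_succ_apply, Nat.succ_eq_add_one, Nat.sub_add_cancel hn, hper.eq] at h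

theorem exists_mem_associated_apply_eq (hid : id ∈ G) {s s' : Interp D}
    (h : SynRelated D G s s') (h' : SynRelated D G s' s) :
    ∃ f ∈ Associated D G, f s = s' := by
  classical
  refine ⟨Equiv.swap s s', ⟨(Equiv.swap s s').bijective, fun t => ?_⟩, Equiv.swap_apply_left s s'⟩
  rcases eq_or_ne t s with rfl | hts
  · rwa [Equiv.swap_apply_left]
  rcases eq_or_ne t s' with rfl | hts'
  · rwa [Equiv.swap_apply_right]
  rw [Equiv.swap_apply_of_ne_of_ne hts hts']
  exact SynRelated.refl hid t

theorem SynRelated.of_piecewise_left (hid : id ∈ G) {s t u : Interp D}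
    (hst : SynRelated D G s t) {R : Set (X → Bool)} (hR : ∀ g ∈ G, ∀ τ ∈ R, pushX g τ ∈ R)
    (hin : ∀ τ ∈ R, induced τ u = induced τ t) (hout : ∀ τ ∉ R, induced τ u = induced τ s) :
    SynRelated D G s u := by
  intro σ
  by_cases hσ : σ ∈ R
  · obtain ⟨g, hg, e⟩ := hst σ
    exact ⟨g, hg, by rw [hin _ (hR g hg σ hσ), e]⟩
  · exact ⟨id, hid, hout σ hσ⟩

theorem SynRelated.of_piecewise_right (hid : id ∈ G) {s t u : Interp D}
    (hst : SynRelated D G s t) {R : Set (X → Bool)}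
    (hin : ∀ τ ∈ R, induced τ u = induced τ t) (hout : ∀ τ ∉ R, induced τ u = induced τ s) :
    SynRelated D G u t := by
  intro σ
  by_cases hσ : σ ∈ R
  · exact ⟨id, hid, (hin σ hσ).symm⟩
  · obtain ⟨g, hg, e⟩ := hst σ
    exact ⟨g, hg, by rw [hout σ hσ, e]⟩

end Orbits

section Graft

variable {D : Y → Set X}

open Classical in
/-- Unless `C ⊆ D y`, the region `{τ | τ = σ on C}` is not determined by `D y`; there `s` and
`t` must already agree for the grafted Skolem function of `y` to depend only on `D y`. -/
noncomputable def Interp.graft (s t : Interp D) (C : Set X) (σ : X → Bool)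
    (hst : ∀ y, ¬ C ⊆ D y → ∀ τ : X → Bool, (∀ x ∈ C, τ x = σ x) → s.sk y τ = t.sk y τ) :
    Interp D where
  sk y τ := if ∀ x ∈ C, τ x = σ x then t.sk y τ else s.sk y τ
  dep y τ τ' hττ' := by
    by_cases hC : C ⊆ D y
    · have hiff : (∀ x ∈ C, τ x = σ x) ↔ (∀ x ∈ C, τ' x = σ x) :=
        forall₂_congr fun x hx => by rw [hττ' x (hC hx)]
      simp only [hiff]
      split_ifs
      · exact t.dep y τ τ' hττ'
      · exact s.dep y τ τ' hττ'
    · have hs : ∀ τ : X → Bool,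
          (if ∀ x ∈ C, τ x = σ x then t.sk y τ else s.sk y τ) = s.sk y τ := fun τ => by
        split_ifs with h
        exacts [(hst y hC τ h).symm, rfl]
      rw [hs, hs]
      exact s.dep y τ τ' hττ'

variable {s t : Interp D} {C : Set X} {σ τ : X → Bool}
  {hst : ∀ y, ¬ C ⊆ D y → ∀ τ : X → Bool, (∀ x ∈ C, τ x = σ x) → s.sk y τ = t.sk y τ}

theorem induced_graft_of_eqOn (hτ : ∀ x ∈ C, τ x = σ x) :
    induced τ (s.graft t C σ hst) = induced τ t := by
  funext v
  cases v with
  | inl x => rfl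
  | inr y => exact if_pos hτ

theorem induced_graft_of_not_eqOn (hτ : ¬ ∀ x ∈ C, τ x = σ x) :
    induced τ (s.graft t C σ hst) = induced τ s := by
  funext v
  cases v with
  | inl x => rfl
  | inr y => exact if_neg hτ

end Graft

theorem stmt_12_general {X : Type*} [Fintype X] {k : ℕ} (D : Fin k → Set X)
    (G : Set (BF (X ⊕ Fin k) → BF (X ⊕ Fin k))) (hG : AdmissibleGroup D G)
    (f : Interp D → Interp D) (hf : f ∈ Associated D G)
    (σ : X → Bool) (s : Interp D) (i : Fin k)
    (h1 : ∀ j : Fin k, (j < i ∨ ¬ D i ⊆ D j) → ∀ τ : X → Bool,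
      (∀ x ∈ D i, τ x = σ x) →
      induced τ s (Sum.inr j) = induced τ (f s) (Sum.inr j))
    (h2 : ∀ g ∈ G, ∀ τ : X → Bool, (∀ x ∈ D i, τ x = σ x) →
      ∀ x ∈ D i, pushX g τ x = τ x) :
    ∃ s' : Interp D,
      (∀ (j : Fin k) (τ : X → Bool),
        (j < i → induced τ s' (Sum.inr j) = induced τ s (Sum.inr j)) ∧
        (i ≤ j → ¬ (∀ x ∈ D i, τ x = σ x) →
          induced τ s' (Sum.inr j) = induced τ s (Sum.inr j)) ∧
        (i ≤ j → (∀ x ∈ D i, τ x = σ x) →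
          induced τ s' (Sum.inr j) = induced τ (f s) (Sum.inr j))) ∧
      ∃ h ∈ Associated D G, h s = s' := by
  -- Grafting all of `f s` (not only the `y_j` with `j ≥ i`) is harmless: by `h1` the two
  -- interpretations already agree on the region for `j < i`.
  set s' := s.graft (f s) (D i) σ fun j hj => h1 j (Or.inr hj)
  set R : Set (X → Bool) := {τ | ∀ x ∈ D i, τ x = σ x}
  have hin : ∀ τ ∈ R, induced τ s' = induced τ (f s) := fun _ => induced_graft_of_eqOn
  have hout : ∀ τ ∉ R, induced τ s' = induced τ s := fun _ => induced_graft_of_not_eqOn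
  have hR : ∀ g ∈ G, ∀ τ ∈ R, pushX g τ ∈ R := fun g hg τ hτ x hx => by
    rw [h2 g hg τ hτ x hx, hτ x hx]
  refine ⟨s', fun j τ => ⟨fun hji => ?_, fun _ hτ => ?_, fun _ hτ => ?_⟩, ?_⟩
  · by_cases hτ : τ ∈ R
    · rw [hin τ hτ, h1 j (Or.inl hji) τ hτ]
    · rw [hout τ hτ]
  · rw [hout τ hτ]
  · rw [hin τ hτ]
  · have hsfs : SynRelated D G s (f s) := hf.2 s
    have hss' := hsfs.of_piecewise_left hG.id_mem hR hin hout
    have hs's := (hsfs.of_piecewise_right hG.id_mem hin hout).trans hG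
      (SynRelated.apply_left_of_mem_associated hG hf s)
    exact exists_mem_associated_apply_eq hG.id_mem hss' hs's

/-- Lemma 6: exchanging the subtree of `s` rooted at `σ|_{D_i}`
with the corresponding subtree of `f(s)` yields an interpretation `s'` in the
same `G_sem`-orbit. -/
theorem stmt_12 {X : Type*} [Fintype X] [DecidableEq X] {k : ℕ} (D : Fin k → Set X)
    (G : Set (BF (X ⊕ Fin k) → BF (X ⊕ Fin k))) (hG : AdmissibleGroup D G)
    (f : Interp D → Interp D) (hf : f ∈ Associated D G)
    (σ : X → Bool) (s : Interp D) (i : Fin k)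
    (h1 : ∀ j : Fin k, (j < i ∨ ¬ D i ⊆ D j) → ∀ τ : X → Bool,
      (∀ x ∈ D i, τ x = σ x) →
      induced τ s (Sum.inr j) = induced τ (f s) (Sum.inr j))
    (h2 : ∀ g ∈ G, ∀ τ : X → Bool, (∀ x ∈ D i, τ x = σ x) →
      ∀ x ∈ D i, pushX g τ x = τ x) :
    ∃ s' : Interp D,
      (∀ (j : Fin k) (τ : X → Bool),
        (j < i → induced τ s' (Sum.inr j) = induced τ s (Sum.inr j)) ∧
        (i ≤ j → ¬ (∀ x ∈ D i, τ x = σ x) →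
          induced τ s' (Sum.inr j) = induced τ s (Sum.inr j)) ∧
        (i ≤ j → (∀ x ∈ D i, τ x = σ x) →
          induced τ s' (Sum.inr j) = induced τ (f s) (Sum.inr j))) ∧
      ∃ h ∈ Associated D G, h s = s' :=
  stmt_12_general D G hG f hf σ s i h1 h2

end DQBF
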